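/- Let Ω ⊆ ℂ be open, S ⊆ Ω, and let A, B ⊆ S be measurable subsets of positive finite area. Then for every univalent map φ on Ω, area(φ(B)) ≤ M_S(A)·area(φ(A))·area(B). -/

import Mathlib

open Set MeasureTheory
open scoped ENNReal

noncomputable section

/-- A univalent map on `Ω`: injective and holomorphic. -/
def Univalent (φ : ℂ → ℂ) (Ω : Set ℂ) : Prop :=
  DifferentiableOn ℂ φ Ω ∧ Set.InjOn φ Ω

/-- The Koebe distortion constant
`C(z,w) = sup {|φ'(z)|/|φ'(w)| : φ univalent on Ω}` (valued in `ℝ≥0∞`). -/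
def Cdist (Ω : Set ℂ) (z w : ℂ) : ℝ≥0∞ :=
  ⨆ φ ∈ {φ : ℂ → ℂ | Univalent φ Ω}, ENNReal.ofReal (‖deriv φ z‖ / ‖deriv φ w‖)

/-- `g_A(z) = ∫_A C(z,w)⁻² dArea(w)`. -/
def gfun (Ω A : Set ℂ) (z : ℂ) : ℝ≥0∞ := ∫⁻ w in A, ((Cdist Ω z w)⁻¹) ^ 2

/-- `M_S(A) = 1 / inf {g_A(z) : z ∈ S}`. -/
def Mfun (Ω Sdom A : Set ℂ) : ℝ≥0∞ := (⨅ z ∈ Sdom, gfun Ω A z)⁻¹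

/-! By the change of variables formula, `area (φ '' E) = ∫_E ‖φ'‖²` for measurable `E ⊆ Ω`.
For `w ∈ A` with `φ' w ≠ 0`, the definition of `C` gives `‖φ' z‖ ≤ C(z,w) ‖φ' w‖`; this holds
for almost every `w`, because the zeros of `φ'` are isolated (a univalent map is nowhere locally
constant). The null set cannot be skipped: where `φ' w = 0` the quotient in `C` is the junk
value `0`. Integrating over `w ∈ A` gives `‖φ' z‖² g_A(z) ≤ area (φ '' A)`, hence
`‖φ' z‖² ≤ M_S(A) area (φ '' A)` for `z ∈ S`, and integrating that over `B` gives the claim. -/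

open Filter Topology

theorem Set.InjOn.not_eventually_deriv_eq_zero {𝕜 E : Type*} [RCLike 𝕜] [NormedAddCommGroup E]
    [NormedSpace 𝕜 E] {f : 𝕜 → E} {s : Set 𝕜} {z : 𝕜}
    (hf : DifferentiableOn 𝕜 f s) (hinj : InjOn f s) (hs : s ∈ 𝓝 z) :
    ¬∀ᶠ x in 𝓝 z, deriv f x = 0 := by
  intro h
  obtain ⟨r, hr, hball⟩ := Metric.mem_nhds_iff.1 (h.and hs)
  have hconst : ∀ x ∈ Metric.ball z r, f x = f z := fun x hx =>
    Metric.isOpen_ball.is_const_of_deriv_eq_zero (convex_ball z r).isPreconnected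
      (hf.mono fun y hy => (hball hy).2) (fun y hy => (hball hy).1) hx (Metric.mem_ball_self hr)
  have hz : ∀ᶠ x in 𝓝[≠] z, x = z :=
    eventually_nhdsWithin_of_eventually_nhds <| mem_of_superset (Metric.ball_mem_nhds z hr)
      fun x hx => hinj (hball hx).2 (hball (Metric.mem_ball_self hr)).2 (hconst x hx)
  obtain ⟨x, hxz, hne⟩ := (hz.and self_mem_nhdsWithin).exists
  exact hne hxz

theorem volume_image_eq_lintegral_enorm_deriv_sq {f : ℂ → ℂ} {s : Set ℂ} (hs : MeasurableSet s)
    (hf : ∀ x ∈ s, DifferentiableAt ℂ f x) (hinj : InjOn f s) :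
    volume (f '' s) = ∫⁻ x in s, ‖deriv f x‖ₑ ^ 2 := by
  rw [← lintegral_abs_det_fderiv_eq_addHaar_image volume hs
    (fun x hx => ((hf x hx).hasFDerivAt.restrictScalars ℝ).hasFDerivWithinAt) hinj]
  refine lintegral_congr fun x => ?_
  simp [← toSpanSingleton_deriv, ContinuousLinearMap.det,
    LinearMap.det_restrictScalars, Algebra.norm_complex_eq, Complex.normSq_eq_norm_sq]

theorem univalent_id (Ω : Set ℂ) : Univalent id Ω := ⟨differentiableOn_id, injOn_id Ω⟩

namespace Univalent

variable {Ω : Set ℂ} {φ : ℂ → ℂ}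

theorem differentiableAt (hΩ : IsOpen Ω) (hφ : Univalent φ Ω) {z : ℂ} (hz : z ∈ Ω) :
    DifferentiableAt ℂ φ z :=
  (hφ.1 z hz).differentiableAt (hΩ.mem_nhds hz)

theorem ae_deriv_ne_zero (hΩ : IsOpen Ω) (hφ : Univalent φ Ω) :
    ∀ᵐ z ∂volume.restrict Ω, deriv φ z ≠ 0 := by
  refine ae_restrict_le_codiscreteWithin hΩ.measurableSet ?_
  rw [mem_codiscreteWithin_iff_forall_mem_nhdsNE]
  intro z hz
  have han : AnalyticAt ℂ (deriv φ) z := ((hφ.1.analyticOnNhd hΩ).deriv) z hz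
  refine Filter.mem_of_superset ((han.eventually_eq_zero_or_eventually_ne_zero).resolve_left
    (hφ.2.not_eventually_deriv_eq_zero hφ.1 (hΩ.mem_nhds hz))) fun _ => Or.inl

theorem volume_image_eq_lintegral (hΩ : IsOpen Ω) (hφ : Univalent φ Ω) {s : Set ℂ}
    (hs : MeasurableSet s) (hsΩ : s ⊆ Ω) :
    volume (φ '' s) = ∫⁻ x in s, ‖deriv φ x‖ₑ ^ 2 :=
  volume_image_eq_lintegral_enorm_deriv_sq hs (fun _ hx => hφ.differentiableAt hΩ (hsΩ hx))
    (hφ.2.mono hsΩ)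

theorem volume_image_pos (hΩ : IsOpen Ω) (hφ : Univalent φ Ω) {s : Set ℂ}
    (hs : MeasurableSet s) (hsΩ : s ⊆ Ω) (hpos : 0 < volume s) : 0 < volume (φ '' s) := by
  rw [hφ.volume_image_eq_lintegral hΩ hs hsΩ, pos_iff_ne_zero, Ne,
    lintegral_eq_zero_iff ((measurable_deriv φ).enorm.pow_const 2)]
  intro hzero
  have hfalse : ∀ᵐ x ∂volume.restrict s, False := by
    filter_upwards [hzero, ae_restrict_of_ae_restrict_of_subset hsΩ (hφ.ae_deriv_ne_zero hΩ)]
      with _ hx hne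
    exact hne (by simpa using hx)
  rw [Filter.eventually_false_iff_eq_bot, ae_eq_bot, Measure.restrict_eq_zero] at hfalse
  exact hpos.ne' hfalse

theorem ofReal_div_le_Cdist (hφ : Univalent φ Ω) (z w : ℂ) :
    ENNReal.ofReal (‖deriv φ z‖ / ‖deriv φ w‖) ≤ Cdist Ω z w :=
  le_iSup₂ (f := fun ψ (_ : ψ ∈ {ψ : ℂ → ℂ | Univalent ψ Ω}) =>
    ENNReal.ofReal (‖deriv ψ z‖ / ‖deriv ψ w‖)) φ hφ

theorem enorm_deriv_div_Cdist_le (hφ : Univalent φ Ω) (z : ℂ) {w : ℂ} (hw : deriv φ w ≠ 0) :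
    ‖deriv φ z‖ₑ / Cdist Ω z w ≤ ‖deriv φ w‖ₑ := by
  refine ENNReal.div_le_of_le_mul' ?_
  have hC := hφ.ofReal_div_le_Cdist z w
  rw [ENNReal.ofReal_div_of_pos (norm_pos_iff.2 hw), ofReal_norm, ofReal_norm] at hC
  calc ‖deriv φ z‖ₑ = ‖deriv φ z‖ₑ / ‖deriv φ w‖ₑ * ‖deriv φ w‖ₑ :=
        (ENNReal.div_mul_cancel (enorm_ne_zero.2 hw) enorm_ne_top).symm
    _ ≤ Cdist Ω z w * ‖deriv φ w‖ₑ := by gcongr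

end Univalent

theorem one_le_Cdist (Ω : Set ℂ) (z w : ℂ) : 1 ≤ Cdist Ω z w := by
  simpa using (univalent_id Ω).ofReal_div_le_Cdist z w

theorem gfun_le_volume (Ω A : Set ℂ) (z : ℂ) : gfun Ω A z ≤ volume A :=
  calc gfun Ω A z ≤ ∫⁻ _ in A, 1 :=
        lintegral_mono fun w => pow_le_one' (ENNReal.inv_le_one.2 (one_le_Cdist Ω z w)) 2
    _ = volume A := by simp

namespace Univalent

variable {Ω : Set ℂ} {φ : ℂ → ℂ}

theorem enorm_deriv_sq_mul_gfun_le (hΩ : IsOpen Ω) (hφ : Univalent φ Ω) {A : Set ℂ}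
    (hA : MeasurableSet A) (hAΩ : A ⊆ Ω) (z : ℂ) :
    ‖deriv φ z‖ₑ ^ 2 * gfun Ω A z ≤ volume (φ '' A) := by
  rw [hφ.volume_image_eq_lintegral hΩ hA hAΩ, gfun]
  refine (lintegral_const_mul_le _ _).trans (lintegral_mono_ae ?_)
  filter_upwards [ae_restrict_of_ae_restrict_of_subset hAΩ (hφ.ae_deriv_ne_zero hΩ)] with w hw
  rw [← mul_pow, ← div_eq_mul_inv]
  exact pow_le_pow_left' (hφ.enorm_deriv_div_Cdist_le z hw) 2

theorem enorm_deriv_sq_le_Mfun_mul (hΩ : IsOpen Ω) (hφ : Univalent φ Ω) {S A : Set ℂ}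
    (hA : MeasurableSet A) (hAΩ : A ⊆ Ω) (hA₀ : volume A ≠ 0) (hA_top : volume A ≠ ⊤)
    {z : ℂ} (hz : z ∈ S) :
    ‖deriv φ z‖ₑ ^ 2 ≤ Mfun Ω S A * volume (φ '' A) := by
  have hinf_le : ⨅ z ∈ S, gfun Ω A z ≤ gfun Ω A z := iInf₂_le z hz
  have hinf_top : ⨅ z ∈ S, gfun Ω A z ≠ ⊤ :=
    ne_top_of_le_ne_top hA_top (hinf_le.trans (gfun_le_volume Ω A z))
  have himage : volume (φ '' A) ≠ 0 :=
    (hφ.volume_image_pos hΩ hA hAΩ (pos_iff_ne_zero.2 hA₀)).ne'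
  rw [Mfun, mul_comm, ← div_eq_mul_inv,
    ENNReal.le_div_iff_mul_le (Or.inr himage) (Or.inl hinf_top)]
  exact (mul_le_mul_right hinf_le _).trans (hφ.enorm_deriv_sq_mul_gfun_le hΩ hA hAΩ z)

end Univalent

theorem area_image_le_of_univalent_general (Ω : Set ℂ) (hΩ : IsOpen Ω)
    (Sdom : Set ℂ) (hS : Sdom ⊆ Ω)
    (A B : Set ℂ) (hAmeas : MeasurableSet A) (hBmeas : MeasurableSet B)
    (hAsub : A ⊆ Sdom) (hBsub : B ⊆ Sdom)
    (hApos : 0 < volume A) (hAfin : volume A < ⊤)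
    (φ : ℂ → ℂ) (hφ : Univalent φ Ω) :
    volume (φ '' B) ≤ Mfun Ω Sdom A * volume (φ '' A) * volume B :=
  calc volume (φ '' B) = ∫⁻ x in B, ‖deriv φ x‖ₑ ^ 2 :=
        hφ.volume_image_eq_lintegral hΩ hBmeas (hBsub.trans hS)
    _ ≤ ∫⁻ _ in B, Mfun Ω Sdom A * volume (φ '' A) :=
        setLIntegral_mono measurable_const fun _ hx =>
          hφ.enorm_deriv_sq_le_Mfun_mul hΩ hAmeas (hAsub.trans hS) hApos.ne' hAfin.ne (hBsub hx)
    _ = Mfun Ω Sdom A * volume (φ '' A) * volume B := setLIntegral_const _ _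

/-- Abstract distortion estimate: for measurable `A, B ⊆ S ⊆ Ω` of positive
finite area and any univalent `φ` on `Ω`,
`area(φ(B)) ≤ M_S(A)·area(φ(A))·area(B)`. -/
theorem area_image_le_of_univalent (Ω : Set ℂ) (hΩ : IsOpen Ω)
    (Sdom : Set ℂ) (hS : Sdom ⊆ Ω)
    (A B : Set ℂ) (hAmeas : MeasurableSet A) (hBmeas : MeasurableSet B)
    (hAsub : A ⊆ Sdom) (hBsub : B ⊆ Sdom)
    (hApos : 0 < volume A) (hAfin : volume A < ⊤)
    (hBpos : 0 < volume B) (hBfin : volume B < ⊤)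
    (φ : ℂ → ℂ) (hφ : Univalent φ Ω) :
    volume (φ '' B) ≤ Mfun Ω Sdom A * volume (φ '' A) * volume B :=
  area_image_le_of_univalent_general Ω hΩ Sdom hS A B hAmeas hBmeas hAsub hBsub hApos hAfin φ hφ
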